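/- For every α ∈ (0,1) there exists a constant C(α) > 0 such that for every integer N ≥ 1 and every z ∈ S̄_{α,α/4} one has |φ_N(z·√N)| ≤ C(α)^N and |φ_{N−1}(z·√N)| ≤ C(α)^{N−1}. -/

import Mathlib

open Real

noncomputable section

/-- The monic (probabilists') Hermite polynomial, evaluated at a complex number. -/
def hermiteH (k : ℕ) (z : ℂ) : ℂ := Polynomial.aeval z (Polynomial.hermite k)

/-- The normalized Hermite polynomial `p_k = H_k / ((2π)^{1/4} (k!)^{1/2})`. -/
def hermiteP (k : ℕ) (z : ℂ) : ℂ :=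
  hermiteH k z / (((2 * π) ^ ((1:ℝ)/4) * Real.sqrt (Nat.factorial k) : ℝ) : ℂ)

/-- The Hermite function `φ_k(z) = p_k(z) exp(−z²/4)`. -/
def hermitePhi (k : ℕ) (z : ℂ) : ℂ := hermiteP k z * Complex.exp (-(z ^ 2) / 4)

/-- The Hermite reproducing kernel `K_N(z₁,z₂) = Σ_{k<N} φ_k(z₁) φ_k(z₂)`. -/
def kernelK (N : ℕ) (z₁ z₂ : ℂ) : ℂ :=
  ∑ k ∈ Finset.range N, hermitePhi k z₁ * hermitePhi k z₂

/-- The rescaled kernel `K̃_N(z₁,z₂,s) = s^{−1/2} K_N(z₁ s^{−1/2}, z₂ s^{−1/2})`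
(principal powers). -/
def kernelKt (N : ℕ) (z₁ z₂ s : ℂ) : ℂ :=
  s ^ (-(1:ℂ)/2) * kernelK N (z₁ * s ^ (-(1:ℂ)/2)) (z₂ * s ^ (-(1:ℂ)/2))

/-- `d(H) = √(1+iH)`, the principal square root. -/
def dC (H : ℝ) : ℂ := (1 + H * Complex.I) ^ ((1:ℂ)/2)

/-- The closed strip `S̄_{α,β} = {z : |Re z| ≤ 2−α, |Im z| ≤ β}`. -/
def Sbar (α β : ℝ) : Set ℂ := {z : ℂ | |z.re| ≤ 2 - α ∧ |z.im| ≤ β}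

/-- The Wigner semicircle density. -/
def wigner (x : ℝ) : ℝ := (2 * π)⁻¹ * Real.sqrt (4 - x ^ 2)

/-- The analytic continuation of the Wigner density,
`w(z) = (2π)⁻¹ (2−z)^{1/2} (2+z)^{1/2}` (principal powers). -/
def wignerC (z : ℂ) : ℂ :=
  (((2 * π)⁻¹ : ℝ) : ℂ) * ((2 - z) ^ ((1:ℂ)/2) * (2 + z) ^ ((1:ℂ)/2))

open Nat in
theorem hfbs_nat_id (m j : ℕ) :
    ((2*m-1)‼ * ((2*m+j).choose j)) * (j.factorial * (2^m * m.factorial)) = (2*m+j).factorial := by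
  have h1 : (2*m)! = 2 ^ m * m ! * (2*m-1)‼ := by
    cases m with
    | zero => rfl
    | succ m' =>
      have h := Nat.factorial_eq_mul_doubleFactorial (2*m'+1)
      have e1 : 2*(m'+1) = 2*m'+1+1 := by ring
      have e2 : 2*(m'+1)-1 = 2*m'+1 := by omega
      have hd : (2*m'+1+1)‼ = 2^(m'+1)*(m'+1)! := by
        rw [← e1]; exact Nat.doubleFactorial_two_mul (m'+1)
      rw [e2, e1, h, hd]
  have h3 := Nat.choose_mul_factorial_mul_factorial (Nat.le_add_left j (2*m))
  have e : 2*m+j-j = 2*m := by omega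
  rw [e] at h3
  calc ((2*m-1)‼ * ((2*m+j).choose j)) * (j.factorial * (2^m * m.factorial))
      = (2*m+j).choose j * j ! * (2 ^ m * m ! * (2*m-1)‼) := by ring
    _ = (2*m+j).choose j * j ! * (2*m)! := by rw [← h1]
    _ = (2*m+j)! := h3

open Nat in
theorem hfbs_natAbs_coeff_le (k j : ℕ) :
    ((Polynomial.hermite k).coeff j).natAbs *
      (j.factorial * (2^((k-j)/2) * ((k-j)/2).factorial)) ≤ k.factorial := by
  by_cases hpar : Even (k + j)
  · by_cases hjk : j ≤ k
    · have hkj : Even (k - j) := by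
        rw [Nat.even_sub hjk]; exact Nat.even_add.mp hpar
      obtain ⟨m, hm⟩ := hkj
      have hk : k = 2*m + j := by omega
      have hm2 : (k - j)/2 = m := by omega
      rw [hm2, hk, Polynomial.coeff_hermite_explicit]
      have h4 : ((-1:ℤ) ^ m * (2*m-1)‼ * Nat.choose (2*m+j) j).natAbs
          = (2*m-1)‼ * ((2*m+j).choose j) := by
        simp [Int.natAbs_mul, Int.natAbs_pow]
      rw [h4, hfbs_nat_id]
    · rw [Polynomial.coeff_hermite_of_lt (by omega)]
      simp [Nat.factorial_pos]
  · rw [Polynomial.coeff_hermite_of_odd_add (Nat.not_even_iff_odd.mp hpar)]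
    simp [Nat.factorial_pos]

theorem hfbs_sqrt_factorial_le (k : ℕ) : Real.sqrt k.factorial ≤ Real.sqrt k ^ k := by
  have h1 : (k.factorial : ℝ) ≤ (k : ℝ) ^ k := by exact_mod_cast Nat.factorial_le_pow k
  have h2 : Real.sqrt ((k:ℝ) ^ k) = Real.sqrt k ^ k := by
    rw [← Real.sqrt_sq (by positivity : (0:ℝ) ≤ Real.sqrt (k:ℝ) ^ k)]
    congr 1
    rw [← pow_mul, mul_comm k 2, pow_mul, Real.sq_sqrt (by positivity : (0:ℝ) ≤ (k:ℝ))]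
  rw [← h2]
  exact Real.sqrt_le_sqrt h1

open Nat in
theorem hfbs_term_bound (k j : ℕ) (hk : 1 ≤ k) (w : ℂ) :
    |(((Polynomial.hermite k).coeff j : ℤ) : ℝ)| * ‖w‖ ^ j ≤
      (k.factorial : ℝ) * (Real.sqrt k)⁻¹ ^ k *
        (Real.exp (‖w‖ * Real.sqrt k) * Real.exp ((k:ℝ) / 2)) := by
  set r := Real.sqrt k with hrdef
  have hk0 : (0:ℝ) < k := by exact_mod_cast hk
  have hr : 0 < r := Real.sqrt_pos.mpr hk0
  by_cases hc : (Polynomial.hermite k).coeff j = 0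
  · rw [hc]; simp; positivity
  have hjk : j ≤ k := le_of_not_gt (fun h => hc (Polynomial.coeff_hermite_of_lt h))
  have hpar : Even (k + j) := by
    by_contra h
    exact hc (Polynomial.coeff_hermite_of_odd_add (Nat.not_even_iff_odd.mp h))
  have hkj : Even (k - j) := by rw [Nat.even_sub hjk]; exact Nat.even_add.mp hpar
  set m := (k - j) / 2 with hmdef
  have hkm : j + 2 * m = k := by obtain ⟨t, ht⟩ := hkj; omega
  set D : ℝ := (j.factorial : ℝ) * (2^m * (m.factorial : ℝ)) with hDdef
  have hD : 0 < D := by positivity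
  have hcoeff : |(((Polynomial.hermite k).coeff j : ℤ) : ℝ)| ≤ (k.factorial : ℝ) / D := by
    rw [le_div_iff₀ hD]
    have h0 := hfbs_natAbs_coeff_le k j
    have h5 : (↑(((Polynomial.hermite k).coeff j).natAbs *
        (j.factorial * (2^m * m.factorial))) : ℝ) ≤ (k.factorial : ℝ) := by
      exact_mod_cast h0
    push_cast at h5
    have habs : |(((Polynomial.hermite k).coeff j : ℤ) : ℝ)|
        = ((((Polynomial.hermite k).coeff j).natAbs : ℕ) : ℝ) := by
      simp [Nat.cast_natAbs]
    rw [habs, hDdef]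
    exact h5
  have hw : 0 ≤ ‖w‖ := norm_nonneg _
  have e1 : (‖w‖ * r)^j / j.factorial ≤ Real.exp (‖w‖ * r) :=
    Real.pow_div_factorial_le_exp _ (by positivity) j
  have e2 : (r^2/2)^m / m.factorial ≤ Real.exp ((k:ℝ)/2) := by
    have hr2 : r^2 = (k:ℝ) := Real.sq_sqrt hk0.le
    calc (r^2/2)^m / m.factorial ≤ Real.exp (r^2/2) :=
          Real.pow_div_factorial_le_exp _ (by positivity) m
      _ = Real.exp ((k:ℝ)/2) := by rw [hr2]
  have key : (k.factorial : ℝ) / D * ‖w‖ ^ j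
      = (k.factorial : ℝ) * r⁻¹ ^ k *
        (((‖w‖ * r)^j / j.factorial) * ((r^2/2)^m / m.factorial)) := by
    have hrk : r ^ j * (r^2)^m = r ^ k := by rw [← pow_mul, ← pow_add, hkm]
    rw [hDdef]
    rw [inv_pow, ← hrk, div_pow]
    field_simp
    ring
  calc |(((Polynomial.hermite k).coeff j : ℤ) : ℝ)| * ‖w‖ ^ j
      ≤ (k.factorial : ℝ) / D * ‖w‖ ^ j := by
        exact mul_le_mul_of_nonneg_right hcoeff (pow_nonneg hw j)
    _ = (k.factorial : ℝ) * r⁻¹ ^ k *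
        (((‖w‖ * r)^j / j.factorial) * ((r^2/2)^m / m.factorial)) := key
    _ ≤ (k.factorial : ℝ) * r⁻¹ ^ k *
        (Real.exp (‖w‖ * r) * Real.exp ((k:ℝ)/2)) := by
        refine mul_le_mul_of_nonneg_left
          (mul_le_mul e1 e2 (by positivity) (Real.exp_nonneg _)) (by positivity)

theorem hfbs_abs_hermiteH_le (k : ℕ) (hk : 1 ≤ k) (w : ℂ) :
    ‖hermiteH k w‖ ≤
      ((k:ℝ)+1) * ((k.factorial : ℝ) * (Real.sqrt k)⁻¹ ^ k *
        (Real.exp (‖w‖ * Real.sqrt k) * Real.exp ((k:ℝ)/2))) := by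
  have hdeg : (Polynomial.hermite k).natDegree < k + 1 := by
    simp [Polynomial.natDegree_hermite]
  rw [hermiteH, Polynomial.aeval_eq_sum_range' hdeg]
  calc ‖∑ i ∈ Finset.range (k+1), (Polynomial.hermite k).coeff i • w ^ i‖
      ≤ ∑ i ∈ Finset.range (k+1), ‖(Polynomial.hermite k).coeff i • w ^ i‖ :=
        norm_sum_le _ _
    _ ≤ ∑ _i ∈ Finset.range (k+1), (k.factorial : ℝ) * (Real.sqrt k)⁻¹ ^ k *
        (Real.exp (‖w‖ * Real.sqrt k) * Real.exp ((k:ℝ)/2)) := by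
        apply Finset.sum_le_sum
        intro i _
        have heq : ‖(Polynomial.hermite k).coeff i • w ^ i‖
            = |(((Polynomial.hermite k).coeff i : ℤ) : ℝ)| * ‖w‖ ^ i := by
          rw [zsmul_eq_mul, norm_mul, norm_pow, Complex.norm_intCast]
        rw [heq]
        exact hfbs_term_bound k i hk w
    _ = ((k:ℝ)+1) * ((k.factorial : ℝ) * (Real.sqrt k)⁻¹ ^ k *
        (Real.exp (‖w‖ * Real.sqrt k) * Real.exp ((k:ℝ)/2))) := by
        rw [Finset.sum_const, Finset.card_range, nsmul_eq_mul]
        push_cast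
        ring

theorem hfbs_re_neg_sq (w : ℂ) : (-(w^2)/4).re = (w.im^2 - w.re^2)/4 := by
  have h4 : (-(w^2)/4 : ℂ) = -(w^2) / ((4:ℝ):ℂ) := by norm_num
  rw [h4, Complex.div_ofReal]
  simp [pow_two, Complex.mul_re]

theorem hfbs_abs_hermitePhi_le (k : ℕ) (hk : 1 ≤ k) (w : ℂ)
    (h1 : ‖w‖ ≤ 5 * Real.sqrt k) (h2 : w.im^2 ≤ (k:ℝ)) :
    ‖hermitePhi k w‖ ≤ Real.exp 8 ^ k := by
  have hk0 : (0:ℝ) < k := by exact_mod_cast hk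
  set r := Real.sqrt k with hrdef
  have hr : 0 < r := Real.sqrt_pos.mpr hk0
  set F := Real.sqrt (k.factorial : ℝ) with hFdef
  have hF : 0 < F := Real.sqrt_pos.mpr (by exact_mod_cast k.factorial_pos)
  have hFF : F * F = (k.factorial : ℝ) :=
    Real.mul_self_sqrt (by positivity)
  have hpi : (1:ℝ) ≤ (2*π) ^ ((1:ℝ)/4) :=
    Real.one_le_rpow (by nlinarith [Real.pi_gt_three]) (by norm_num)
  -- exponential factor
  have hexp : ‖Complex.exp (-(w^2)/4)‖ ≤ Real.exp ((k:ℝ)/4) := by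
    rw [Complex.norm_exp]
    apply Real.exp_le_exp.mpr
    rw [hfbs_re_neg_sq]
    nlinarith [sq_nonneg w.re]
  -- |w| * r ≤ 5k
  have hwr : ‖w‖ * r ≤ 5 * (k:ℝ) := by
    have hsq : r * r = (k:ℝ) := Real.mul_self_sqrt hk0.le
    calc ‖w‖ * r ≤ (5 * r) * r := mul_le_mul_of_nonneg_right h1 hr.le
      _ = 5 * (r * r) := by ring
      _ = 5 * (k:ℝ) := by rw [hsq]
  have hH : ‖hermiteH k w‖ ≤
      ((k:ℝ)+1) * ((k.factorial : ℝ) * r⁻¹ ^ k *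
        (Real.exp (5*(k:ℝ)) * Real.exp ((k:ℝ)/2))) := by
    refine (hfbs_abs_hermiteH_le k hk w).trans ?_
    gcongr
  -- expression for abs phi
  have habs : ‖hermitePhi k w‖
      = ‖hermiteH k w‖ / ((2*π) ^ ((1:ℝ)/4) * F)
        * ‖Complex.exp (-(w^2)/4)‖ := by
    rw [hermitePhi, hermiteP, norm_mul, norm_div, Complex.norm_real, Real.norm_eq_abs,
      abs_of_nonneg (by positivity)]
  rw [habs]
  have hden : F ≤ (2*π) ^ ((1:ℝ)/4) * F := le_mul_of_one_le_left hF.le hpi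
  calc ‖hermiteH k w‖ / ((2*π) ^ ((1:ℝ)/4) * F)
        * ‖Complex.exp (-(w^2)/4)‖
      ≤ (((k:ℝ)+1) * ((k.factorial : ℝ) * r⁻¹ ^ k *
          (Real.exp (5*(k:ℝ)) * Real.exp ((k:ℝ)/2)))) / F * Real.exp ((k:ℝ)/4) := by
        gcongr
    _ = ((k:ℝ)+1) * (F * r⁻¹ ^ k) *
          (Real.exp (5*(k:ℝ)) * Real.exp ((k:ℝ)/2) * Real.exp ((k:ℝ)/4)) := by
        rw [← hFF]
        field_simp
    _ ≤ Real.exp (k:ℝ) * 1 *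
          (Real.exp (5*(k:ℝ)) * Real.exp ((k:ℝ)/2) * Real.exp ((k:ℝ)/4)) := by
        have ha : ((k:ℝ)+1) ≤ Real.exp (k:ℝ) := Real.add_one_le_exp (k:ℝ)
        have hb : F * r⁻¹ ^ k ≤ 1 := by
          rw [inv_pow, ← div_eq_mul_inv, div_le_one (by positivity)]
          exact hfbs_sqrt_factorial_le k
        have hc : (0:ℝ) ≤ Real.exp (5*(k:ℝ)) * Real.exp ((k:ℝ)/2) * Real.exp ((k:ℝ)/4) := by
          positivity
        refine mul_le_mul_of_nonneg_right ?_ hc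
        exact mul_le_mul ha hb (by positivity) (Real.exp_nonneg _)
    _ = Real.exp ((k:ℝ) + 5*(k:ℝ) + (k:ℝ)/2 + (k:ℝ)/4) := by
        rw [mul_one, ← Real.exp_add, ← Real.exp_add, ← Real.exp_add]
        congr 1
        ring
    _ ≤ Real.exp (8*(k:ℝ)) := by
        apply Real.exp_le_exp.mpr
        nlinarith
    _ = Real.exp 8 ^ k := by
        rw [← Real.exp_nat_mul]
        congr 1
        ring

set_option maxHeartbeats 2000000 in
theorem hermite_function_bound_strip :
    ∀ α ∈ Set.Ioo (0:ℝ) 1, ∃ C : ℝ, 0 < C ∧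
      ∀ N : ℕ, 1 ≤ N → ∀ z ∈ Sbar α (α/4),
        ‖hermitePhi N (z * (Real.sqrt N : ℝ))‖ ≤ C ^ N ∧
        ‖hermitePhi (N-1) (z * (Real.sqrt N : ℝ))‖ ≤ C ^ (N-1) := by
  intro α hα
  refine ⟨Real.exp 8, Real.exp_pos 8, ?_⟩
  intro N hN z hz
  obtain ⟨hre, him⟩ := hz
  have hα0 : 0 < α := hα.1
  have hα1 : α < 1 := hα.2
  have hzre : |z.re| ≤ 2 := hre.trans (by linarith)
  have hzim : |z.im| ≤ 1/4 := him.trans (by linarith)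
  have hzim2 : z.im^2 ≤ 1/16 := by
    have h := abs_le.mp hzim
    nlinarith [h.1, h.2]
  have hzabs : ‖z‖ ≤ 3 := by
    calc ‖z‖ ≤ |z.re| + |z.im| := Complex.norm_le_abs_re_add_abs_im z
      _ ≤ 2 + 1/4 := add_le_add hzre hzim
      _ ≤ 3 := by norm_num
  set w : ℂ := z * ((Real.sqrt N : ℝ) : ℂ) with hw
  have hN0 : (0:ℝ) < N := by exact_mod_cast hN
  have hrN : 0 ≤ Real.sqrt N := Real.sqrt_nonneg _
  have hsqN : Real.sqrt N ^ 2 = (N:ℝ) := Real.sq_sqrt hN0.le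
  have hwabs : ‖w‖ = ‖z‖ * Real.sqrt N := by
    rw [hw, norm_mul, Complex.norm_real, Real.norm_eq_abs, abs_of_nonneg hrN]
  have hwabs3 : ‖w‖ ≤ 3 * Real.sqrt N := by
    rw [hwabs]; exact mul_le_mul_of_nonneg_right hzabs hrN
  have hwim : w.im = z.im * Real.sqrt N := by
    rw [hw, Complex.mul_im]; simp
  have hwim2 : w.im^2 ≤ (N:ℝ)/16 := by
    rw [hwim, mul_pow, hsqN]
    nlinarith
  constructor
  · -- k = N
    apply hfbs_abs_hermitePhi_le N hN w
    · refine hwabs3.trans ?_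
      nlinarith
    · refine hwim2.trans ?_
      nlinarith
  · by_cases hN1 : N = 1
    · -- N = 1 : need abs (hermitePhi 0 w) ≤ 1
      subst hN1
      have hw1 : w = z := by
        rw [hw]; norm_num
      have hφ : hermitePhi 0 z
          = Complex.exp (-(z^2)/4) / (((2*π) ^ ((1:ℝ)/4) : ℝ) : ℂ) := by
        rw [hermitePhi, hermiteP, hermiteH]
        rw [Polynomial.hermite_zero]
        simp [Nat.factorial_zero]
        ring
      have hc1 : (1:ℝ) ≤ (2*π) ^ ((1:ℝ)/4) :=
        Real.one_le_rpow (by nlinarith [Real.pi_gt_three]) (by norm_num)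
      have hcpos : (0:ℝ) < (2*π) ^ ((1:ℝ)/4) := lt_of_lt_of_le one_pos hc1
      have hE : ‖Complex.exp (-(z^2)/4)‖ ≤ Real.exp (1/64 : ℝ) := by
        rw [Complex.norm_exp]
        apply Real.exp_le_exp.mpr
        rw [hfbs_re_neg_sq]
        nlinarith [sq_nonneg z.re]
      have hexp64 : Real.exp (1/64 : ℝ) ≤ 64/63 := by
        have h := Real.add_one_le_exp (-(1/64) : ℝ)
        rw [Real.exp_neg] at h
        have hpos : (0:ℝ) < Real.exp (1/64 : ℝ) := Real.exp_pos _
        have hme : Real.exp (1/64:ℝ) * (Real.exp (1/64:ℝ))⁻¹ = 1 :=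
          mul_inv_cancel₀ (ne_of_gt hpos)
        nlinarith
      have hpi4 : (64/63 : ℝ) ≤ (2*π) ^ ((1:ℝ)/4) := by
        have h6 : ((64/63:ℝ))^(4:ℕ) ≤ 2*π := by nlinarith [Real.pi_gt_three]
        have heq : ((64/63:ℝ)) = (((64/63:ℝ))^(4:ℕ))^((1:ℝ)/4) := by
          rw [← Real.rpow_natCast (64/63:ℝ) 4, ← Real.rpow_mul (by norm_num)]
          norm_num
        rw [heq]
        exact Real.rpow_le_rpow (by positivity) h6 (by norm_num)
      have hfinal : ‖hermitePhi 0 z‖ ≤ 1 := by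
        rw [hφ, norm_div, Complex.norm_real, Real.norm_eq_abs, abs_of_pos hcpos]
        rw [div_le_one hcpos]
        calc ‖Complex.exp (-(z^2)/4)‖ ≤ Real.exp (1/64:ℝ) := hE
          _ ≤ 64/63 := hexp64
          _ ≤ (2*π) ^ ((1:ℝ)/4) := hpi4
      simpa [hw1] using hfinal
    · -- N ≥ 2
      have hN2 : 2 ≤ N := by omega
      have hk1 : 1 ≤ N - 1 := by omega
      have hkc : ((N - 1 : ℕ) : ℝ) = (N:ℝ) - 1 := by
        push_cast [Nat.cast_sub (by omega : 1 ≤ N)]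
        ring
      have hk0 : (0:ℝ) ≤ ((N-1 : ℕ):ℝ) := by positivity
      apply hfbs_abs_hermitePhi_le (N-1) hk1 w
      · -- |w| ≤ 5 √(N-1)
        refine hwabs3.trans ?_
        have h9 : 9 * (N:ℝ) ≤ 25 * ((N-1:ℕ):ℝ) := by
          rw [hkc]
          have : (2:ℝ) ≤ (N:ℝ) := by exact_mod_cast hN2
          nlinarith
        have hs : Real.sqrt (9 * (N:ℝ)) ≤ Real.sqrt (25 * ((N-1:ℕ):ℝ)) :=
          Real.sqrt_le_sqrt h9
        have h3N : Real.sqrt (9 * (N:ℝ)) = 3 * Real.sqrt N := by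
          rw [Real.sqrt_mul (by norm_num : (0:ℝ) ≤ 9), show (9:ℝ) = 3^2 by norm_num,
            Real.sqrt_sq (by norm_num : (0:ℝ) ≤ 3)]
        have h5k : Real.sqrt (25 * ((N-1:ℕ):ℝ)) = 5 * Real.sqrt ((N-1:ℕ):ℝ) := by
          rw [Real.sqrt_mul (by norm_num : (0:ℝ) ≤ 25), show (25:ℝ) = 5^2 by norm_num,
            Real.sqrt_sq (by norm_num : (0:ℝ) ≤ 5)]
        rw [h3N, h5k] at hs
        exact hs
      · -- w.im² ≤ N-1
        refine hwim2.trans ?_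
        rw [hkc]
        have : (2:ℝ) ≤ (N:ℝ) := by exact_mod_cast hN2
        nlinarith

end
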